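/- arXiv:2104.12286 — 2 statements merged into one kernel-verified Lean document; each statement's English description precedes it below -/
import Mathlib

section
/- Every bipartite graph whose edges can be partitioned into d forests is (d+1)-choosable (i.e., (d+1)-list-colorable). -/
open unitInterval

namespace OnePlanarPaper

abbrev Plane : Type := ℝ × ℝ

/-- A (good) drawing of a simple graph in the plane: vertices are distinct points,
each edge is an injective arc between the images of its endpoints, arcs do not pass
through other vertices, and the two orientations of an edge trace the same arc. -/
structure Drawing {V : Type*} (G : SimpleGraph V) where
  vtx : V → Plane
  arc : ∀ ⦃u v : V⦄, G.Adj u v → Path (vtx u) (vtx v)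
  vtx_inj : Function.Injective vtx
  arc_inj : ∀ ⦃u v : V⦄ (h : G.Adj u v), Function.Injective ⇑(arc h)
  arc_symm : ∀ ⦃u v : V⦄ (h : G.Adj u v), Set.range ⇑(arc h) = Set.range ⇑(arc h.symm)
  arc_avoid : ∀ ⦃u v : V⦄ (h : G.Adj u v) (w : V),
      vtx w ∈ Set.range ⇑(arc h) → w = u ∨ w = v

namespace Drawing

variable {V : Type*} {G : SimpleGraph V} (D : Drawing G)

/-- The interior points of the arc of an edge (endpoints excluded). -/
def interiorPts {u v : V} (h : G.Adj u v) : Set Plane :=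
  {p | ∃ t : I, t ≠ 0 ∧ t ≠ 1 ∧ D.arc h t = p}

/-- Two edges cross if their interiors meet. -/
def Crosses {u v x y : V} (h₁ : G.Adj u v) (h₂ : G.Adj x y) : Prop :=
  (D.interiorPts h₁ ∩ D.interiorPts h₂).Nonempty

/-- A planar drawing: no two distinct edges cross. -/
def IsPlanar : Prop :=
  ∀ ⦃u v x y : V⦄ (h₁ : G.Adj u v) (h₂ : G.Adj x y),
    s(u, v) ≠ s(x, y) → ¬ D.Crosses h₁ h₂

/-- A 1-planar drawing: every edge is crossed by at most one other edge. -/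
def IsOnePlanar : Prop :=
  ∀ ⦃u v : V⦄ (h₁ : G.Adj u v),
    {ed : Sym2 V | ed ≠ s(u, v) ∧
      ∃ (x y : V) (h₂ : G.Adj x y), s(x, y) = ed ∧ D.Crosses h₁ h₂}.Subsingleton

/-- The set of points covered by the drawing. -/
def image : Set Plane :=
  Set.range D.vtx ∪ {p | ∃ (u v : V) (h : G.Adj u v), p ∈ Set.range ⇑(D.arc h)}

/-- An edge (as an unordered pair) is crossed in the drawing. -/
def Crossed (ed : Sym2 V) : Prop :=
  ∃ (u v x y : V) (h₁ : G.Adj u v) (h₂ : G.Adj x y),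
    s(u, v) = ed ∧ s(x, y) ≠ ed ∧ D.Crosses h₁ h₂

/-- Planar-maximal: no crossing-free edge can be added between non-adjacent vertices. -/
def PlanarMaximal : Prop :=
  ∀ u v : V, u ≠ v → ¬ G.Adj u v →
    ∀ p : Path (D.vtx u) (D.vtx v), Function.Injective ⇑p →
      ∃ t : I, t ≠ 0 ∧ t ≠ 1 ∧ p t ∈ D.image

end Drawing

/-- A graph is planar if it has a crossing-free drawing. -/
def Planar {V : Type*} (G : SimpleGraph V) : Prop :=
  ∃ D : Drawing G, D.IsPlanar

/-- A graph is 1-planar if it has a drawing where every edge is crossed at most once. -/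
def OnePlanar {V : Type*} (G : SimpleGraph V) : Prop :=
  ∃ D : Drawing G, D.IsOnePlanar

/-- A PGF-partition: the edge set splits into a planar part and a forest part. -/
def PGFPartition {V : Type*} (G : SimpleGraph V) : Prop :=
  ∃ A B : Set (Sym2 V), A ∪ B = G.edgeSet ∧ Disjoint A B ∧
    Planar (SimpleGraph.fromEdgeSet A) ∧ (SimpleGraph.fromEdgeSet B).IsAcyclic

/-- The edge set partitions into `d` forests. -/
def ForestPartition {V : Type*} (G : SimpleGraph V) (d : ℕ) : Prop :=
  ∃ F : Fin d → Set (Sym2 V),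
    (⋃ i, F i) = G.edgeSet ∧
    Pairwise (Function.onFun Disjoint F) ∧
    ∀ i, (SimpleGraph.fromEdgeSet (F i)).IsAcyclic

/-- `k`-choosability (list colorability with lists of size `k`). -/
def Choosable {V : Type*} (G : SimpleGraph V) (k : ℕ) : Prop :=
  ∀ L : V → Finset ℕ, (∀ v, (L v).card = k) →
    ∃ c : V → ℕ, (∀ v, c v ∈ L v) ∧ ∀ ⦃u v : V⦄, G.Adj u v → c u ≠ c v

/-- A loopless multigraph drawn in the plane without crossings: distinct edges
meet only at common endpoints. -/
structure PlaneMultigraph (V E : Type*) where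
  vtx : V → Plane
  ends : E → V × V
  no_loops : ∀ e, (ends e).1 ≠ (ends e).2
  arc : (e : E) → Path (vtx (ends e).1) (vtx (ends e).2)
  vtx_inj : Function.Injective vtx
  arc_inj : ∀ e, Function.Injective ⇑(arc e)
  arc_avoid : ∀ e w, vtx w ∈ Set.range ⇑(arc e) → w = (ends e).1 ∨ w = (ends e).2
  planar : ∀ e e', e ≠ e' →
      ∀ p ∈ Set.range ⇑(arc e), p ∈ Set.range ⇑(arc e') → ∃ w, p = vtx w

namespace PlaneMultigraph

variable {V E : Type*} (G : PlaneMultigraph V E)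

/-- The set of points covered by the drawing. -/
def image : Set Plane := Set.range G.vtx ∪ ⋃ e, Set.range ⇑(G.arc e)

/-- A face: a connected component of the complement of the drawing. -/
def IsFace (f : Set Plane) : Prop :=
  ∃ p ∉ G.image, f = connectedComponentIn G.imageᶜ p

/-- A face contains a vertex if the vertex point is on its boundary (closure). -/
def Contains (f : Set Plane) (v : V) : Prop := G.vtx v ∈ closure f

/-- The unordered pair of endpoints of an edge. -/
def edgeSym (e : E) : Sym2 V := s((G.ends e).1, (G.ends e).2)

/-- Adjacency in the multigraph. -/
def Adj (a b : V) : Prop := ∃ e, G.edgeSym e = s(a, b)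

/-- `f` is a face of degree `k` with facial cycle `z` and boundary edges `e`:
consecutive boundary edges `e i` join `z i` to `z (i+1)` (cyclically), the `e i`
are distinct, and they make up exactly the boundary of `f`. -/
def IsFacialCycle (k : ℕ) (f : Set Plane) (z : ZMod k → V) (e : ZMod k → E) : Prop :=
  G.IsFace f ∧ Function.Injective e ∧
  (∀ i : ZMod k, G.edgeSym (e i) = s(z i, z (i + 1))) ∧
  frontier f = ⋃ i, Set.range ⇑(G.arc (e i))

/-- A quadrangle: a face of degree 4 with facial cycle `⟨z 0, z 1, z 2, z 3⟩`. -/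
def IsQuadrangle (f : Set Plane) (z : ZMod 4 → V) (e : ZMod 4 → E) : Prop :=
  G.IsFacialCycle 4 f z e

end PlaneMultigraph

/-- `H` is the planar skeleton of the drawing `D` of `G`: same vertex placement,
and its edges are exactly the uncrossed edges of `G` with the same arcs. -/
def IsSkeleton {V E : Type*} {G : SimpleGraph V} (D : Drawing G)
    (H : PlaneMultigraph V E) : Prop :=
  H.vtx = D.vtx ∧
  Function.Injective H.edgeSym ∧
  (∀ e : E, H.edgeSym e ∈ G.edgeSet ∧ ¬ D.Crossed (H.edgeSym e)) ∧
  (∀ ed ∈ G.edgeSet, ¬ D.Crossed ed → ∃ e : E, H.edgeSym e = ed) ∧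
  (∀ (e : E) (u v : V) (h : G.Adj u v), H.edgeSym e = s(u, v) →
      Set.range ⇑(H.arc e) = Set.range ⇑(D.arc h))

end OnePlanarPaper

/-! Root each of the `d` forests and orient every edge from child to parent, so that every
vertex has out-degree at most `d`. As the graph is bipartite, every set of vertices contains a
kernel (an independent set absorbing all other vertices). Then lists of size `d + 1` suffice,
by the argument of Bondy, Boppana and Siegel: for a colour `a`, colour by `a` a kernel of the
vertices whose lists contain `a`; every other such vertex loses an out-neighbour when the kernel
is deleted, and `a` is removed from all remaining lists. -/

namespace SimpleGraph

variable {V : Type*} {G : SimpleGraph V}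

theorem IsAcyclic.snd_eq_or_snd_eq (hG : G.IsAcyclic) {u v w w' : V} (huv : G.Adj u v)
    {p : G.Walk u w} {q : G.Walk v w'} (hp : p.IsPath) (hq : q.IsPath) (hw : w = w') :
    p.snd = v ∨ q.snd = u := by
  subst hw
  by_cases hv : v ∈ p.support
  · exact .inl (hG.eq_snd_of_adj_start hp huv hv).symm
  · have hpq : p.cons huv.symm = q :=
      congrArg Subtype.val ((hG.subsingleton_path v w).elim ⟨_, hp.cons hv⟩ ⟨q, hq⟩)
    exact .inr (hpq ▸ Walk.snd_cons p huv.symm)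

theorem IsAcyclic.exists_parent (hG : G.IsAcyclic) :
    ∃ par : V → V, ∀ u v, G.Adj u v → par u = v ∨ par v = u := by
  have hroot : ∀ v, ∃ p : G.Walk v (G.connectedComponentMk v).out, p.IsPath := fun v =>
    (ConnectedComponent.exact (G.connectedComponentMk v).out_eq.symm).exists_isPath
  choose p hp using hroot
  exact ⟨fun v => (p v).snd, fun u v huv => hG.snd_eq_or_snd_eq huv (hp u) (hp v)
    (by rw [ConnectedComponent.connectedComponentMk_eq_of_adj huv])⟩

end SimpleGraph

open Finset

section Kernel

variable {V : Type*} (r : V → V → Prop)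

def IsKernel (S K : Finset V) : Prop :=
  K ⊆ S ∧ (∀ u ∈ K, ∀ v ∈ K, ¬ r u v) ∧ ∀ v ∈ S, v ∉ K → ∃ w ∈ K, r v w

variable {r}

theorem exists_isKernel_of_two_coloring (C : V → Fin 2) (hC : ∀ u v, r u v → C u ≠ C v)
    (S : Finset V) : ∃ K, IsKernel r S K := by
  classical
  induction S using Finset.strongInduction with
  | H S ih =>
  by_cases hsink : ∃ z ∈ S, ∀ w ∈ S, ¬ r z w
  · -- put a sink `z` into the kernel and recurse on what `z` does not absorb
    obtain ⟨z, hzS, hz⟩ := hsink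
    obtain ⟨K, hKT, hKind, hKabs⟩ := ih {v ∈ S | v ≠ z ∧ ¬ r v z}
      (filter_ssubset.2 ⟨z, hzS, by simp⟩)
    have hKS : K ⊆ S := hKT.trans (filter_subset _ _)
    refine ⟨insert z K, insert_subset hzS hKS, ?_, ?_⟩
    · intro u hu v hv
      rcases mem_insert.1 hu with rfl | huK
      · exact hz v (insert_subset hzS hKS hv)
      rcases mem_insert.1 hv with rfl | hvK
      · exact (mem_filter.1 (hKT huK)).2.2
      · exact hKind u huK v hvK
    · intro v hvS hvK
      rw [mem_insert, not_or] at hvK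
      by_cases hvz : r v z
      · exact ⟨z, mem_insert_self z K, hvz⟩
      · obtain ⟨w, hwK, hvw⟩ := hKabs v (mem_filter.2 ⟨hvS, hvK.1, hvz⟩) hvK.2
        exact ⟨w, mem_insert_of_mem hwK, hvw⟩
  · -- without sinks, the colour class `0` absorbs the colour class `1`
    push Not at hsink
    refine ⟨{v ∈ S | C v = 0}, filter_subset _ _, ?_, ?_⟩
    · intro u hu v hv huv
      exact hC u v huv ((mem_filter.1 hu).2.trans (mem_filter.1 hv).2.symm)
    · intro v hvS hvK
      obtain ⟨w, hwS, hvw⟩ := hsink v hvS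
      have hCv : C v ≠ 0 := fun h => hvK (mem_filter.2 ⟨hvS, h⟩)
      have hCw := hC v w hvw
      exact ⟨w, mem_filter.2 ⟨hwS, by omega⟩, hvw⟩

end Kernel

section ListColoring

variable {V α : Type*} [DecidableEq V] [DecidableEq α] {r : V → V → Prop} [DecidableRel r]

theorem IsKernel.card_filter_sdiff_lt_card_erase {U K : Finset V} {L : V → Finset α} {a : α}
    (hK : IsKernel r {v ∈ U | a ∈ L v} K) {v : V} (hv : v ∈ U \ K)
    (hL : #{w ∈ U | r v w} < #(L v)) : #{w ∈ U \ K | r v w} < #((L v).erase a) := by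
  obtain ⟨hvU, hvK⟩ := mem_sdiff.1 hv
  have hsub : {w ∈ U \ K | r v w} ⊆ {w ∈ U | r v w} := filter_subset_filter _ sdiff_subset
  by_cases ha : a ∈ L v
  · obtain ⟨w, hwK, hvw⟩ := hK.2.2 v (mem_filter.2 ⟨hvU, ha⟩) hvK
    have hw : w ∈ {w ∈ U | r v w} := mem_filter.2 ⟨(mem_filter.1 (hK.1 hwK)).1, hvw⟩
    have hlt := card_lt_card ((ssubset_iff_of_subset hsub).2 ⟨w, hw, by simp [hwK]⟩)
    rw [card_erase_of_mem ha]
    omega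
  · rw [erase_eq_of_notMem ha]
    exact (card_le_card hsub).trans_lt hL

theorem exists_list_coloring_of_isKernel [Nonempty α] (hker : ∀ S, ∃ K, IsKernel r S K)
    (U : Finset V) (L : V → Finset α) (hL : ∀ v ∈ U, #{w ∈ U | r v w} < #(L v)) :
    ∃ c : V → α, (∀ v ∈ U, c v ∈ L v) ∧ ∀ u ∈ U, ∀ v ∈ U, r u v → c u ≠ c v := by
  induction U using Finset.strongInduction generalizing L with
  | H U ih =>
  rcases U.eq_empty_or_nonempty with rfl | ⟨v₀, hv₀⟩
  · exact ⟨fun _ => Classical.arbitrary α, by simp, by simp⟩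
  obtain ⟨a, ha⟩ := card_pos.1 ((Nat.zero_le _).trans_lt (hL v₀ hv₀))
  obtain ⟨K, hK⟩ := hker {v ∈ U | a ∈ L v}
  have ⟨hKS, hKind, hKabs⟩ := hK
  have hKne : K.Nonempty := by
    by_cases h : v₀ ∈ K
    · exact ⟨v₀, h⟩
    · obtain ⟨w, hw, -⟩ := hKabs v₀ (mem_filter.2 ⟨hv₀, ha⟩) h
      exact ⟨w, hw⟩
  obtain ⟨c, hcL, hc⟩ := ih (U \ K) (sdiff_ssubset (hKS.trans (filter_subset _ _)) hKne)
    (fun v => (L v).erase a) fun v hv =>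
      hK.card_filter_sdiff_lt_card_erase hv (hL v (mem_sdiff.1 hv).1)
  have hca : ∀ v ∈ U, v ∉ K → c v ≠ a := fun v hv hvK =>
    ne_of_mem_erase (hcL v (mem_sdiff.2 ⟨hv, hvK⟩))
  refine ⟨fun v => if v ∈ K then a else c v, fun v hv => ?_, fun u hu v hv huv => ?_⟩
  · dsimp only
    split_ifs with hvK
    · exact (mem_filter.1 (hKS hvK)).2
    · exact mem_of_mem_erase (hcL v (mem_sdiff.2 ⟨hv, hvK⟩))
  · by_cases huK : u ∈ K <;> by_cases hvK : v ∈ K <;> simp only [huK, hvK, if_true, if_false]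
    · exact absurd huv (hKind u huK v hvK)
    · exact (hca v hv hvK).symm
    · exact hca u hu huK
    · exact hc u (mem_sdiff.2 ⟨hu, huK⟩) v (mem_sdiff.2 ⟨hv, hvK⟩) huv

end ListColoring

namespace OnePlanarPaper

theorem ForestPartition.exists_parents {V : Type*} {G : SimpleGraph V} {d : ℕ}
    (h : ForestPartition G d) :
    ∃ par : Fin d → V → V, ∀ u v, G.Adj u v → ∃ i, par i u = v ∨ par i v = u := by
  obtain ⟨F, hFG, -, hF⟩ := h
  choose par hpar using fun i => (hF i).exists_parent
  refine ⟨par, fun u v huv => ?_⟩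
  obtain ⟨i, hi⟩ := Set.mem_iUnion.1 (hFG ▸ huv : s(u, v) ∈ ⋃ i, F i)
  exact ⟨i, hpar i u v ((SimpleGraph.fromEdgeSet_adj _).2 ⟨hi, huv.ne⟩)⟩

/-- Every bipartite graph whose edges partition into `d` forests is `(d+1)`-choosable. -/
theorem bipartite_forests_choosable {V : Type*} [Fintype V] (G : SimpleGraph V)
    (hbip : G.Colorable 2) (d : ℕ) (h : ForestPartition G d) :
    Choosable G (d + 1) := by
  classical
  obtain ⟨C⟩ := hbip
  obtain ⟨par, hpar⟩ := h.exists_parents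
  let r : V → V → Prop := fun u v => G.Adj u v ∧ ∃ i, par i u = v
  have hout : ∀ v, #{w | r v w} ≤ d := fun v => calc
    #{w | r v w} ≤ #(univ.image fun i => par i v) :=
      card_le_card fun w hw => by simpa using (mem_filter.1 hw).2.2
    _ ≤ d := card_image_le.trans (card_fin d).le
  have hker (S : Finset V) : ∃ K, IsKernel r S K :=
    exists_isKernel_of_two_coloring C (fun _ _ huv => C.valid huv.1) S
  intro L hL
  obtain ⟨c, hcL, hc⟩ := exists_list_coloring_of_isKernel hker univ L fun v _ => by
    rw [hL v]
    exact Nat.lt_succ_of_le (hout v)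
  refine ⟨c, fun v => hcL v (mem_univ v), fun u v huv => ?_⟩
  obtain ⟨i, hi | hi⟩ := hpar u v huv
  · exact hc u (mem_univ u) v (mem_univ v) ⟨huv, i, hi⟩
  · exact (hc v (mem_univ v) u (mem_univ u) ⟨huv.symm, i, hi⟩).symm

end OnePlanarPaper
end

section
/- Let G be a multigraph, e = uv a non-loop edge of G, and C' a set of edges of G/e such that in the subgraph formed by C' there is no path between any two vertices that are adjacent in G/e. Then in G, the edge set C = C' ∪ {e} contains no path between any two vertices adjacent in G. -/
open unitInterval

/-! Contracting `e = uv` is the map `q` that sends `v` to `u`. A walk in `C ∪ {e}` maps under `q`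
to a walk in `C'`: edges of `C` go to edges of `C'` or collapse, and `e` itself collapses. Since
`u` and `v` are not adjacent, an edge `ab` of `G` is not collapsed, so `q a` and `q b` are
adjacent in `G/e`, and a path between them in `C'` is excluded. -/

namespace SimpleGraph

variable {V W : Type*} {G : SimpleGraph V} {H : SimpleGraph W}

theorem Reachable.map_of_adj_imp_eq_or_adj (f : V → W)
    (hf : ∀ ⦃x y⦄, G.Adj x y → f x = f y ∨ H.Adj (f x) (f y)) {x y : V}
    (h : G.Reachable x y) : H.Reachable (f x) (f y) := by
  have step : ∀ ⦃a b⦄, G.Adj a b → H.Reachable (f a) (f b) := fun a b hab =>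
    (hf hab).elim (fun heq => by rw [heq]) Adj.reachable
  rw [reachable_iff_reflTransGen] at h
  induction h with
  | refl => rfl
  | tail _ hbc ih => exact ih.trans (step hbc)

theorem Reachable.map_fromEdgeSet_union {S T : Set (Sym2 V)} {S' : Set (Sym2 W)} (f : V → W)
    (hS : Set.MapsTo (Sym2.map f) S S') (hT : ∀ z ∈ T, (z.map f).IsDiag) {x y : V}
    (h : (fromEdgeSet (S ∪ T)).Reachable x y) : (fromEdgeSet S').Reachable (f x) (f y) := by
  refine h.map_of_adj_imp_eq_or_adj f fun a b hab => ?_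
  rw [fromEdgeSet_adj] at hab
  obtain ⟨hab | hab, -⟩ := hab
  · by_cases hfab : f a = f b
    · exact .inl hfab
    · exact .inr ⟨by simpa using hS hab, hfab⟩
  · exact .inl (by simpa using hT _ hab)

end SimpleGraph

section Contraction

variable {V : Type*} [DecidableEq V] {u v : V}

theorem isDiag_map_contract : (s(u, v).map fun w => if w = v then u else w).IsDiag := by
  by_cases huv : u = v <;> simp [huv]

theorem sym2_eq_of_contract_eq {a b : V} (hab : a ≠ b)
    (h : (if a = v then u else a) = (if b = v then u else b)) : s(a, b) = s(u, v) := by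
  by_cases ha : a = v <;> by_cases hb : b = v <;> simp only [ha, hb, if_true, if_false] at h
  · exact absurd (ha.trans hb.symm) hab
  · simp [ha, ← h, Sym2.eq_swap]
  · simp [hb, h]
  · exact absurd h hab

end Contraction

namespace OnePlanarPaper

namespace PlaneMultigraph

variable {V E : Type*} {G : PlaneMultigraph V E}

theorem Adj.ne {a b : V} (h : G.Adj a b) : a ≠ b := by
  obtain ⟨ε, hε⟩ := h
  rintro rfl
  have hloop := G.no_loops ε
  simp only [edgeSym, Sym2.eq_iff, or_self] at hε
  exact hloop (hε.1.trans hε.2.symm)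

end PlaneMultigraph

theorem contraction_no_path_lift_general {V E : Type*} [DecidableEq V] (G : PlaneMultigraph V E) (u v : V)
    (hnadj : ¬ G.Adj u v)
    (C C' : Set (Sym2 V)) (q : V → V) (hq : q = fun w => if w = v then u else w)
    (himg : Set.BijOn (Sym2.map q) C C')
    (hC' : ∀ a b : V, q a ≠ q b →
        (∃ ε : E, Sym2.map q (G.edgeSym ε) = s(q a, q b)) →
        ¬ (SimpleGraph.fromEdgeSet C').Reachable (q a) (q b)) :
    ∀ a b : V, G.Adj a b →
      ¬ (SimpleGraph.fromEdgeSet (C ∪ {s(u, v)})).Reachable a b := by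
  intro a b hab hreach
  have hab_ne := hab.ne
  obtain ⟨ε, hε⟩ := hab
  have hqab : q a ≠ q b := fun h =>
    hnadj ⟨ε, hε.trans (sym2_eq_of_contract_eq hab_ne (by subst hq; exact h))⟩
  refine hC' a b hqab ⟨ε, by rw [hε, Sym2.map_mk]⟩ ?_
  refine hreach.map_fromEdgeSet_union q himg.mapsTo ?_
  rintro z rfl
  exact hq ▸ isDiag_map_contract

/-- Contraction lifting for the no-path condition: let `u, v` be the distinct,
non-adjacent endpoints of the contracted pair `e` in the multigraph `G`, and let
`C'` be a set of edges of `G/e` containing no path between any two vertices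
adjacent in `G/e`. Then `C = C' ∪ {e}` (lifted to `G`) contains no path between
any two vertices adjacent in `G`. -/
theorem contraction_no_path_lift {V E : Type*} [DecidableEq V] (G : PlaneMultigraph V E) (u v : V)
    (hne : u ≠ v) (hnadj : ¬ G.Adj u v)
    (C C' : Set (Sym2 V)) (q : V → V) (hq : q = fun w => if w = v then u else w)
    (himg : Set.BijOn (Sym2.map q) C C')
    (hC' : ∀ a b : V, q a ≠ q b →
        (∃ ε : E, Sym2.map q (G.edgeSym ε) = s(q a, q b)) →
        ¬ (SimpleGraph.fromEdgeSet C').Reachable (q a) (q b)) :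
    ∀ a b : V, G.Adj a b →
      ¬ (SimpleGraph.fromEdgeSet (C ∪ {s(u, v)})).Reachable a b :=
  contraction_no_path_lift_general G u v hnadj C C' q hq himg hC'

end OnePlanarPaper
end
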